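/- arXiv:2501.12513 — 4 statements merged into one kernel-verified Lean document; each statement's English description precedes it below -/
import Mathlib

section
/- Fix 0 < q < 1 and n ≥ 1. Let G = (G_1, ..., G_n) be i.i.d. geometric random variables with P(G_i = k) = q^k(1-q). Define Γ_n(G) to be the permutation of [n] obtained by ordering the indices i ∈ [n] by the total order: i precedes j iff G_i > G_j, or G_i = G_j and i < j; the permutation π lists the indices in this order. Then for every permutation π ∈ S_n, P(Γ_n(G) = π) = q^{maj(π)} / [n]_q!, where maj(π) is the sum of the descent positions of π and [n]_q! = ∏_{i=1}^n (1 + q + ... + q^{i-1}). -/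
open MeasureTheory ProbabilityTheory

/-- The major index of a word `w` of length `N`: the sum of the (1-indexed) positions
`i` with `w i > w (i+1)`. -/
def wmaj {N : ℕ} {α : Type*} [LinearOrder α] (w : Fin N → α) : ℕ :=
  ∑ i ∈ Finset.range (N - 1),
    if h : i + 1 < N then
      (if w ⟨i + 1, h⟩ < w ⟨i, Nat.lt_of_succ_lt h⟩ then i + 1 else 0)
    else 0

/-- The major index of a permutation. -/
def maj {n : ℕ} (π : Equiv.Perm (Fin n)) : ℕ := wmaj (fun i => π i)

/-- The `q`-integer `[m]_q = 1 + q + ⋯ + q^{m-1}`. -/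
def qint (q : ℝ) (m : ℕ) : ℝ := ∑ j ∈ Finset.range m, q ^ j

/-- The `q`-factorial `[n]_q! = ∏_{i=1}^n [i]_q`. -/
def qfact (q : ℝ) (n : ℕ) : ℝ := ∏ i ∈ Finset.range n, qint q (i + 1)

/-- `GammaEq G π` says the Maj sampler applied to `G` produces `π`: reading off the
indices of `[n]` sorted by the order `i ≺ j ↔ G i > G j ∨ (G i = G j ∧ i < j)` in
ascending order yields `π(1), …, π(n)`.  Equivalently, each adjacent pair in the list
`π(1), …, π(n)` is correctly ordered. -/
def GammaEq {n : ℕ} (G : Fin n → ℕ) (π : Equiv.Perm (Fin n)) : Prop :=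
  ∀ i : ℕ, ∀ h : i + 1 < n,
    G (π ⟨i + 1, h⟩) < G (π ⟨i, Nat.lt_of_succ_lt h⟩) ∨
      (G (π ⟨i + 1, h⟩) = G (π ⟨i, Nat.lt_of_succ_lt h⟩) ∧
        (π ⟨i, Nat.lt_of_succ_lt h⟩ : ℕ) < (π ⟨i + 1, h⟩ : ℕ))

/-!
Reading `g ∘ π` from left to right, `GammaEq g π` says that the sequence never increases and
strictly decreases at each descent of `π`. Subtracting the forced drops, such sequences are in
bijection with arbitrary `c : Fin n → ℕ` through `g (π i) = ∑_{j ≥ i} (c j + [j is a descent])`,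
whence `∑ g = maj π + ∑ (i + 1) c i`. Under the i.i.d. geometric law, the atom `g` has mass
`∏ q ^ g i (1 - q)`, so the probability is `q ^ maj π ∏_{m=1}^{n} ∑_k q ^ (m k) (1 - q)`,
and each factor equals `1 / [m]_q`.
-/

open Finset

lemma ENNReal.tsum_pi_prod {β : Type*} :
    ∀ (m : ℕ) (f : Fin m → β → ENNReal), ∑' c : Fin m → β, ∏ i, f i (c i) = ∏ i, ∑' k, f i k
  | 0, f => by simp [tsum_fintype]
  | m + 1, f => by
    rw [← (Fin.consEquiv fun _ => β).tsum_eq, Fin.prod_univ_succ, ← ENNReal.tsum_pi_prod m,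
      ← ENNReal.tsum_mul_right, ENNReal.tsum_prod']
    simp [Fin.prod_univ_succ, Fin.consEquiv, ENNReal.tsum_mul_left]

lemma measure_preimage_eq_tsum_prod {ι Ω β : Type*} [Fintype ι] [MeasurableSpace Ω] [Countable β]
    [MeasurableSpace β] [MeasurableSingletonClass β] {μ : Measure Ω} {G : ι → Ω → β}
    (hG : ∀ i, Measurable (G i)) (hindep : iIndepFun G μ) (S : Set (ι → β)) :
    μ ((fun ω i => G i ω) ⁻¹' S) = ∑' g : S, ∏ i, μ (G i ⁻¹' {(g : ι → β) i}) := by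
  have hF : Measurable fun ω i => G i ω := measurable_pi_lambda _ hG
  rw [← tsum_measure_preimage_singleton S.to_countable fun g _ => hF (measurableSet_singleton g)]
  refine tsum_congr fun g => ?_
  have hatom : (fun ω i => G i ω) ⁻¹' {(g : ι → β)} = ⋂ i ∈ univ, G i ⁻¹' {(g : ι → β) i} := by
    ext ω
    simp [funext_iff]
  rw [hatom, hindep.measure_inter_preimage_eq_mul univ fun i _ => measurableSet_singleton _]

section Gaps

variable {n : ℕ}

def padZero (w : Fin n → ℕ) (i : ℕ) : ℕ := if h : i < n then w ⟨i, h⟩ else 0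

@[simp] lemma padZero_val (w : Fin n → ℕ) (i : Fin n) : padZero w i = w i := by
  simp [padZero]

lemma padZero_of_le (w : Fin n → ℕ) {i : ℕ} (hi : n ≤ i) : padZero w i = 0 := by
  simp [padZero, Nat.not_lt.2 hi]

variable (d : ℕ → ℕ)

/-- `b` drops by at least `d i` from position `i` to position `i + 1`, reading `b n` as `0`. -/
def DropsAtLeast (b : Fin n → ℕ) : Prop := ∀ i : Fin n, padZero b (i + 1) + d i ≤ b i

def tailSum (c : Fin n → ℕ) (i : ℕ) : ℕ := ∑ j ∈ Ico i n, (padZero c j + d j)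

lemma tailSum_of_lt (c : Fin n → ℕ) {i : ℕ} (hi : i < n) :
    tailSum d c i = padZero c i + d i + tailSum d c (i + 1) := by
  rw [tailSum, ← insert_Ico_add_one_left_eq_Ico hi, sum_insert (by simp), tailSum]

lemma tailSum_of_le (c : Fin n → ℕ) {i : ℕ} (hi : n ≤ i) : tailSum d c i = 0 := by
  simp [tailSum, hi]

def ofGaps (c : Fin n → ℕ) : Fin n → ℕ := fun i => tailSum d c i

def gaps (b : Fin n → ℕ) : Fin n → ℕ := fun i => b i - padZero b (i + 1) - d i

lemma padZero_ofGaps (c : Fin n → ℕ) (i : ℕ) : padZero (ofGaps d c) i = tailSum d c i := by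
  by_cases hi : i < n
  · simp [padZero, hi, ofGaps]
  · rw [padZero_of_le _ (not_lt.1 hi), tailSum_of_le _ _ (not_lt.1 hi)]

lemma dropsAtLeast_ofGaps (c : Fin n → ℕ) : DropsAtLeast d (ofGaps d c) := fun i => by
  rw [padZero_ofGaps, ofGaps, tailSum_of_lt d c i.2]
  omega

lemma gaps_ofGaps (c : Fin n → ℕ) : gaps d (ofGaps d c) = c := funext fun i => by
  rw [gaps, padZero_ofGaps, ofGaps, tailSum_of_lt d c i.2, padZero_val]
  omega

lemma tailSum_gaps {b : Fin n → ℕ} (hb : DropsAtLeast d b) (i : ℕ) :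
    tailSum d (gaps d b) i = padZero b i := by
  by_cases hi : i < n
  · have hdrop := hb ⟨i, hi⟩
    rw [tailSum_of_lt d _ hi, tailSum_gaps hb (i + 1)]
    simp only [padZero, hi, dite_true, gaps] at hdrop ⊢
    omega
  · rw [tailSum_of_le _ _ (not_lt.1 hi), padZero_of_le _ (not_lt.1 hi)]
termination_by n - i

lemma ofGaps_gaps {b : Fin n → ℕ} (hb : DropsAtLeast d b) : ofGaps d (gaps d b) = b :=
  funext fun i => by rw [ofGaps, tailSum_gaps d hb, padZero_val]

def gapsEquiv : (Fin n → ℕ) ≃ {b : Fin n → ℕ // DropsAtLeast d b} where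
  toFun c := ⟨ofGaps d c, dropsAtLeast_ofGaps d c⟩
  invFun b := gaps d b
  left_inv := gaps_ofGaps d
  right_inv b := Subtype.ext (ofGaps_gaps d b.2)

lemma sum_ofGaps (c : Fin n → ℕ) :
    ∑ i, ofGaps d c i = ∑ i : Fin n, ((i : ℕ) + 1) * c i + ∑ j ∈ range n, (j + 1) * d j := by
  have hc : ∑ i : Fin n, ((i : ℕ) + 1) * c i = ∑ j ∈ range n, (j + 1) * padZero c j := by
    rw [← Fin.sum_univ_eq_sum_range (fun j => (j + 1) * padZero c j)]
    simp
  rw [hc, ← sum_add_distrib, show ∑ i, ofGaps d c i = ∑ i ∈ range n, tailSum d c i from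
    Fin.sum_univ_eq_sum_range _ n, range_eq_Ico]
  simp only [tailSum, sum_Ico_Ico_comm, sum_const, Nat.card_Ico, Nat.sub_zero, smul_eq_mul]
  exact sum_congr rfl fun j _ => by ring

end Gaps

section Descents

variable {n : ℕ}

def descent (π : Equiv.Perm (Fin n)) (i : ℕ) : ℕ :=
  if h : i + 1 < n then (if π ⟨i + 1, h⟩ < π ⟨i, Nat.lt_of_succ_lt h⟩ then 1 else 0) else 0

lemma maj_eq_sum_descent (π : Equiv.Perm (Fin n)) :
    maj π = ∑ j ∈ range n, (j + 1) * descent π j := by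
  rw [maj, wmaj, ← sum_subset (range_subset_range.2 (Nat.sub_le n 1))]
  · refine sum_congr rfl fun j hj => ?_
    have hj : j + 1 < n := by rw [mem_range] at hj; omega
    simp only [descent, hj, dite_true]
    split_ifs <;> simp
  · intro j _ hj
    have hj : ¬ j + 1 < n := by rw [mem_range] at hj; omega
    simp [descent, hj]

lemma lt_or_eq_and_lt_iff {α : Type*} [LinearOrder α] {x y : α} (hxy : x ≠ y) (a b : ℕ) :
    (b < a ∨ b = a ∧ x < y) ↔ b + (if y < x then 1 else 0) ≤ a := by
  rcases hxy.lt_or_gt with h | h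
  · simp only [h, h.not_gt, if_false, and_true]
    omega
  · simp only [h, h.not_gt, if_true, and_false, or_false]
    omega

lemma gammaEq_iff_dropsAtLeast (g : Fin n → ℕ) (π : Equiv.Perm (Fin n)) :
    GammaEq g π ↔ DropsAtLeast (descent π) (g ∘ π) := by
  have hstep : ∀ (i : ℕ) (h : i + 1 < n), padZero (g ∘ π) (i + 1) + descent π i =
      g (π ⟨i + 1, h⟩) + if π ⟨i + 1, h⟩ < π ⟨i, Nat.lt_of_succ_lt h⟩ then 1 else 0 := by
    intro i h
    simp [padZero, descent, h]
  have hne : ∀ (i : ℕ) (h : i + 1 < n), π ⟨i, Nat.lt_of_succ_lt h⟩ ≠ π ⟨i + 1, h⟩ := by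
    intro i h
    simp
  constructor
  · intro hg i
    by_cases h : (i : ℕ) + 1 < n
    · rw [hstep i h]
      exact (lt_or_eq_and_lt_iff (hne i h) _ _).1 (by simpa using hg i h)
    · simp [padZero_of_le _ (not_lt.1 h), descent, h]
  · intro hb i h
    have := hb ⟨i, Nat.lt_of_succ_lt h⟩
    rw [hstep i h] at this
    simpa using (lt_or_eq_and_lt_iff (hne i h) _ _).2 this

def gammaEqEquiv (π : Equiv.Perm (Fin n)) : (Fin n → ℕ) ≃ {g : Fin n → ℕ // GammaEq g π} :=
  (gapsEquiv (descent π)).trans <| Equiv.subtypeEquiv (π.arrowCongr (Equiv.refl ℕ)) fun b => by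
    simp [gammaEq_iff_dropsAtLeast, Function.comp_def]

lemma sum_gammaEqEquiv (π : Equiv.Perm (Fin n)) (c : Fin n → ℕ) :
    ∑ i, (gammaEqEquiv π c : Fin n → ℕ) i = maj π + ∑ i : Fin n, ((i : ℕ) + 1) * c i := by
  rw [maj_eq_sum_descent, add_comm, ← sum_ofGaps]
  exact π.symm.sum_comp (ofGaps (descent π) c)

lemma prod_pow_mul_gammaEqEquiv {M : Type*} [CommMonoid M] (π : Equiv.Perm (Fin n))
    (x r : M) (c : Fin n → ℕ) :
    ∏ i, x ^ (gammaEqEquiv π c : Fin n → ℕ) i * r =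
      x ^ maj π * ∏ i : Fin n, (x ^ ((i : ℕ) + 1)) ^ c i * r := by
  simp only [prod_mul_distrib, prod_pow_eq_pow_sum, ← pow_mul]
  rw [sum_gammaEqEquiv, pow_add, mul_assoc]

end Descents

section Geometric

variable {q : ℝ}

lemma qint_nonneg (hq : 0 ≤ q) (m : ℕ) : 0 ≤ qint q m :=
  sum_nonneg fun _ _ => pow_nonneg hq _

lemma qfact_nonneg (hq : 0 ≤ q) (n : ℕ) : 0 ≤ qfact q n :=
  prod_nonneg fun _ _ => qint_nonneg hq _

lemma tsum_geometric_mul_one_sub (hq0 : 0 ≤ q) (hq1 : q < 1) {m : ℕ} (hm : m ≠ 0) :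
    ∑' k : ℕ, (q ^ m) ^ k * (1 - q) = (qint q m)⁻¹ := by
  have hqm : q ^ m < 1 := pow_lt_one₀ hq0 hq1 hm
  rw [tsum_mul_right, tsum_geometric_of_lt_one (pow_nonneg hq0 m) hqm, qint, geom_sum_eq hq1.ne]
  have : q ^ m - 1 ≠ 0 := by linarith
  have : 1 - q ^ m ≠ 0 := by linarith
  have : q - 1 ≠ 0 := by linarith
  field_simp
  ring

lemma tsum_ofReal_geometric_mul_one_sub (hq0 : 0 ≤ q) (hq1 : q < 1) {m : ℕ} (hm : m ≠ 0) :
    ∑' k : ℕ, ENNReal.ofReal ((q ^ m) ^ k * (1 - q)) = ENNReal.ofReal (qint q m)⁻¹ := by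
  have hnonneg : ∀ k : ℕ, 0 ≤ (q ^ m) ^ k * (1 - q) := fun k =>
    mul_nonneg (pow_nonneg (pow_nonneg hq0 m) k) (sub_nonneg.2 hq1.le)
  rw [← ENNReal.ofReal_tsum_of_nonneg hnonneg
    ((summable_geometric_of_lt_one (pow_nonneg hq0 m) (pow_lt_one₀ hq0 hq1 hm)).mul_right _),
    tsum_geometric_mul_one_sub hq0 hq1 hm]

lemma tsum_prod_ofReal_geometric_gammaEq (hq0 : 0 ≤ q) (hq1 : q < 1) {n : ℕ}
    (π : Equiv.Perm (Fin n)) :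
    ∑' g : {g : Fin n → ℕ // GammaEq g π}, ∏ i, ENNReal.ofReal (q ^ g.1 i * (1 - q)) =
      ENNReal.ofReal (q ^ maj π / qfact q n) := by
  have hweight : ∀ m : ℕ, 0 ≤ q ^ m * (1 - q) := fun m =>
    mul_nonneg (pow_nonneg hq0 m) (sub_nonneg.2 hq1.le)
  calc ∑' g : {g : Fin n → ℕ // GammaEq g π}, ∏ i, ENNReal.ofReal (q ^ g.1 i * (1 - q))
      = ∑' c : Fin n → ℕ, ENNReal.ofReal (q ^ maj π) *
          ∏ i : Fin n, ENNReal.ofReal ((q ^ ((i : ℕ) + 1)) ^ c i * (1 - q)) := by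
        rw [← (gammaEqEquiv π).tsum_eq]
        refine tsum_congr fun c => ?_
        rw [← ENNReal.ofReal_prod_of_nonneg fun i _ => hweight _, prod_pow_mul_gammaEqEquiv,
          ENNReal.ofReal_mul (pow_nonneg hq0 _),
          ENNReal.ofReal_prod_of_nonneg fun i _ => by simpa [← pow_mul] using hweight _]
    _ = ENNReal.ofReal (q ^ maj π) * ∏ i : Fin n, ENNReal.ofReal (qint q ((i : ℕ) + 1))⁻¹ := by
        rw [ENNReal.tsum_mul_left, ENNReal.tsum_pi_prod n
          fun i k => ENNReal.ofReal ((q ^ ((i : ℕ) + 1)) ^ k * (1 - q))]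
        simp only [tsum_ofReal_geometric_mul_one_sub hq0 hq1 (Nat.succ_ne_zero _)]
    _ = ENNReal.ofReal (q ^ maj π / qfact q n) := by
        rw [div_eq_mul_inv, qfact, ← prod_inv_distrib, ENNReal.ofReal_mul (pow_nonneg hq0 _),
          ENNReal.ofReal_prod_of_nonneg fun i _ => inv_nonneg.2 (qint_nonneg hq0 _),
          Fin.prod_univ_eq_prod_range (fun i => ENNReal.ofReal (qint q (i + 1))⁻¹)]

end Geometric

theorem maj_sampler_general {Ω : Type*} [MeasurableSpace Ω] (μ : Measure Ω)
    [IsProbabilityMeasure μ] (q : ℝ) (hq0 : 0 < q) (hq1 : q < 1)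
    (n : ℕ) (G : Fin n → Ω → ℕ) (hmeas : ∀ i, Measurable (G i))
    (hindep : iIndepFun G μ)
    (hgeom : ∀ i, ∀ k : ℕ, (μ {ω | G i ω = k}).toReal = q ^ k * (1 - q))
    (π : Equiv.Perm (Fin n)) :
    (μ {ω | GammaEq (fun i => G i ω) π}).toReal = q ^ maj π / qfact q n := by
  have hatom : ∀ i k, μ (G i ⁻¹' {k}) = ENNReal.ofReal (q ^ k * (1 - q)) := fun i k => by
    rw [← hgeom i k, ENNReal.ofReal_toReal (measure_ne_top _ _)]
    rfl
  have hmass : μ {ω | GammaEq (fun i => G i ω) π} = ENNReal.ofReal (q ^ maj π / qfact q n) := by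
    rw [← tsum_prod_ofReal_geometric_gammaEq hq0.le hq1 π]
    exact (measure_preimage_eq_tsum_prod hmeas hindep {g | GammaEq g π}).trans
      (tsum_congr fun g => prod_congr rfl fun i _ => hatom i _)
  rw [hmass, ENNReal.toReal_ofReal (div_nonneg (pow_nonneg hq0.le _) (qfact_nonneg hq0.le n))]

/-- The Maj sampler: if `G₁, …, Gₙ` are i.i.d. geometric with parameter `1 - q`,
then for every permutation `π ∈ Sₙ`, `P(Γₙ(G) = π) = q^{maj π} / [n]_q!`. -/
theorem maj_sampler {Ω : Type*} [MeasurableSpace Ω] (μ : Measure Ω)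
    [IsProbabilityMeasure μ] (q : ℝ) (hq0 : 0 < q) (hq1 : q < 1)
    (n : ℕ) (hn : 1 ≤ n) (G : Fin n → Ω → ℕ) (hmeas : ∀ i, Measurable (G i))
    (hindep : iIndepFun G μ)
    (hgeom : ∀ i, ∀ k : ℕ, (μ {ω | G i ω = k}).toReal = q ^ k * (1 - q))
    (π : Equiv.Perm (Fin n)) :
    (μ {ω | GammaEq (fun i => G i ω) π}).toReal = q ^ maj π / qfact q n :=
  maj_sampler_general μ q hq0 hq1 n G hmeas hindep hgeom π
end

section
/- Fix 0 < q < 1 and i ∈ ℕ. Let G = (G_1,...,G_n) be i.i.d. geometric with parameter 1-q, and let D_i be the number of fixed points of π = Γ_n(G) lying in the set G_i = {j : G_j = i}. Then for all 0 ≤ k ≤ n, P(D_i ≥ k) = (q^i(1-q))^k, and P(D_i ≥ k) = 0 for k > n; that is, D_i is distributed as min(Geom(1 - q^i(1-q)), n). -/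
/-!
Encode `G` by the word `w j = compare (G j) i` over `{lt, eq, gt}`. For `j` in level `i` one has
`π⁻¹(j) = j - balance w j`, where `balance w t = #{j < t | w j = lt} - #{j ≥ t | w j = gt}`, so the
fixed points in level `i` are the letters `eq` at zeros of `balance w`. The balance is
nondecreasing, runs from `≤ 0` to `≥ 0` and moves exactly at letters other than `eq`, and
inserting a letter `eq` does not change it. Hence inserting `eq` at the first zero of the balance
of a word of length `n` is a bijection onto the words of length `n + 1` having a fixed point
(inverted by deleting their first fixed point), and it adds exactly one fixed point. So the
weight of `{D ≥ k + 1}` in length `n + 1` is `P(G = i)` times the weight of `{D ≥ k}` in length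
`n`, and `P(D ≥ k) = P(G = i) ^ k`.
-/

open MeasureTheory ProbabilityTheory

/-- `invGamma G j` is the 0-indexed position `π⁻¹(j)` of index `j` in the
permutation `π = Γₙ(G)` produced by the Maj sampler (indices ordered with `i` before
`j` iff `G i > G j`, or `G i = G j` and `i < j`). -/
def invGamma {n : ℕ} (G : Fin n → ℕ) (j : Fin n) : ℕ :=
  (Finset.univ.filter (fun j' : Fin n =>
    G j < G j' ∨ (G j' = G j ∧ j' < j))).card

/-- `Dcount G i` is the number of fixed points of `π = Γₙ(G)` lying in the level set
`𝒢ᵢ = {j : G j = i}`; note `π j = j` iff `invGamma G j = j`. -/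
def Dcount {n : ℕ} (G : Fin n → ℕ) (i : ℕ) : ℕ :=
  (Finset.univ.filter (fun j : Fin n => G j = i ∧ invGamma G j = (j : ℕ))).card


open Finset

namespace MajSampler

variable {n : ℕ}

def balance (w : Fin n → Ordering) (t : ℕ) : ℤ :=
  ∑ j : Fin n,
    if (j : ℕ) < t then (if w j = .lt then 1 else 0) else (if w j = .gt then -1 else 0)

def fixedPoints (w : Fin n → Ordering) : Finset (Fin n) :=
  {j | w j = .eq ∧ balance w j = 0}

lemma mem_fixedPoints {w : Fin n → Ordering} {j : Fin n} :
    j ∈ fixedPoints w ↔ w j = .eq ∧ balance w j = 0 := by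
  simp [fixedPoints]

lemma balance_succ (w : Fin n → Ordering) {t : ℕ} (ht : t < n) :
    balance w (t + 1) = balance w t + if w ⟨t, ht⟩ = .eq then 0 else 1 := by
  have key : ∀ j : Fin n,
      (if (j : ℕ) < t + 1 then (if w j = .lt then 1 else 0) else (if w j = .gt then -1 else 0))
        = (if (j : ℕ) < t then (if w j = .lt then 1 else 0) else (if w j = .gt then -1 else 0))
          + if j = ⟨t, ht⟩ then (if w j = .eq then 0 else 1) else (0 : ℤ) := by
    intro j
    simp only [Fin.ext_iff]
    cases w j <;> split_ifs <;> simp_all <;> omega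
  simp only [balance, key, sum_add_distrib, sum_ite_eq', mem_univ, if_true]

lemma balance_succ_of_le (w : Fin n → Ordering) {t : ℕ} (ht : n ≤ t) :
    balance w (t + 1) = balance w t := by
  unfold balance
  congr! 2 with j
  simp only [show (j : ℕ) < t + 1 ∧ (j : ℕ) < t from by omega]

lemma balance_mono (w : Fin n → Ordering) : Monotone (balance w) := by
  refine monotone_nat_of_le_succ fun t => ?_
  rcases lt_or_ge t n with ht | ht
  · rw [balance_succ w ht]
    split <;> omega
  · rw [balance_succ_of_le w ht]

lemma balance_zero_nonpos (w : Fin n → Ordering) : balance w 0 ≤ 0 :=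
  sum_nonpos fun j _ => by split_ifs <;> simp_all

lemma balance_nonneg_of_le (w : Fin n → Ordering) {t : ℕ} (ht : n ≤ t) : 0 ≤ balance w t :=
  sum_nonneg fun j _ => by split_ifs <;> simp_all; omega

lemma exists_balance_eq_zero (w : Fin n → Ordering) : ∃ t ≤ n, balance w t = 0 := by
  have hex : ∃ t, 0 ≤ balance w t := ⟨n, balance_nonneg_of_le w le_rfl⟩
  have hle : Nat.find hex ≤ n := Nat.find_min' hex (balance_nonneg_of_le w le_rfl)
  refine ⟨Nat.find hex, hle, le_antisymm ?_ (Nat.find_spec hex)⟩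
  rcases Nat.eq_zero_or_pos (Nat.find hex) with h0 | hpos
  · exact h0 ▸ balance_zero_nonpos w
  · obtain ⟨t, ht⟩ : ∃ t, Nat.find hex = t + 1 := ⟨_, (Nat.succ_pred_eq_of_pos hpos).symm⟩
    have hneg : balance w t < 0 := not_le.mp (Nat.find_min hex (by omega))
    rw [ht, balance_succ w (by omega)]
    split <;> omega

lemma eq_of_balance_eq_zero (w : Fin n → Ordering) {t s : ℕ} (hts : t < s) (hs : s ≤ n)
    (ht0 : balance w t = 0) (hs0 : balance w s = 0) : w ⟨t, by omega⟩ = .eq := by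
  have hle : balance w (t + 1) ≤ balance w s := balance_mono w hts
  rw [balance_succ w (by omega)] at hle
  split at hle <;> first | assumption | omega

def firstZero (w : Fin n → Ordering) : ℕ :=
  Nat.find ((exists_balance_eq_zero w).imp fun _ h => h.2)

lemma balance_firstZero (w : Fin n → Ordering) : balance w (firstZero w) = 0 :=
  Nat.find_spec ((exists_balance_eq_zero w).imp fun _ h => h.2)

lemma firstZero_le_of_balance_eq_zero (w : Fin n → Ordering) {t : ℕ} (ht : balance w t = 0) :
    firstZero w ≤ t :=
  Nat.find_min' _ ht

lemma firstZero_le (w : Fin n → Ordering) : firstZero w ≤ n :=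
  let ⟨_, htn, ht⟩ := exists_balance_eq_zero w
  (firstZero_le_of_balance_eq_zero w ht).trans htn

lemma balance_insertNth_eq (s : Fin (n + 1)) (w : Fin n → Ordering) {t t' : ℕ}
    (h : ∀ j, (s.succAbove j : ℕ) < t ↔ (j : ℕ) < t') :
    balance (s.insertNth .eq w) t = balance w t' := by
  simp [balance, Fin.sum_univ_succAbove _ s, h]

lemma balance_insertNth_succAbove (s : Fin (n + 1)) (w : Fin n → Ordering) (j : Fin n) :
    balance (s.insertNth .eq w) (s.succAbove j) = balance w j :=
  balance_insertNth_eq s w fun _ => by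
    rw [← Fin.lt_def, ← Fin.lt_def, Fin.succAbove_lt_succAbove_iff]

lemma balance_insertNth_self (s : Fin (n + 1)) (w : Fin n → Ordering) :
    balance (s.insertNth .eq w) s = balance w s :=
  balance_insertNth_eq s w fun _ => by
    rw [← Fin.lt_def, Fin.succAbove_lt_iff_castSucc_lt, Fin.lt_def, Fin.val_castSucc]

lemma succAbove_mem_fixedPoints_insertNth (s : Fin (n + 1)) (w : Fin n → Ordering)
    (j : Fin n) :
    s.succAbove j ∈ fixedPoints (s.insertNth .eq w) ↔ j ∈ fixedPoints w := by
  simp [mem_fixedPoints, balance_insertNth_succAbove]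

lemma self_mem_fixedPoints_insertNth (s : Fin (n + 1)) (w : Fin n → Ordering) :
    s ∈ fixedPoints (s.insertNth .eq w) ↔ balance w s = 0 := by
  simp [mem_fixedPoints, balance_insertNth_self]

lemma card_fixedPoints_insertNth (s : Fin (n + 1)) (w : Fin n → Ordering)
    (hs : balance w s = 0) :
    #(fixedPoints (s.insertNth .eq w)) = #(fixedPoints w) + 1 := by
  have hcard : ∀ {m} (S : Finset (Fin m)), #S = ∑ t, if t ∈ S then 1 else 0 := by
    intro m S
    simp
  rw [hcard, hcard, Fin.sum_univ_succAbove _ s]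
  simp only [succAbove_mem_fixedPoints_insertNth, self_mem_fixedPoints_insertNth, hs]
  simp [add_comm]

lemma isLeast_fixedPoints_insertNth_iff (s : Fin (n + 1)) (w : Fin n → Ordering) :
    IsLeast (fixedPoints (s.insertNth .eq w) : Set (Fin (n + 1))) s ↔
      (s : ℕ) = firstZero w := by
  constructor
  · rintro ⟨hs, hleast⟩
    have hs0 : balance w s = 0 := (self_mem_fixedPoints_insertNth s w).1 hs
    refine le_antisymm ?_ (firstZero_le_of_balance_eq_zero w hs0)
    by_contra! hlt
    set t : Fin n := ⟨firstZero w, by omega⟩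
    have ht : t ∈ fixedPoints w := mem_fixedPoints.2
      ⟨eq_of_balance_eq_zero w hlt (by omega) (balance_firstZero w) hs0, balance_firstZero w⟩
    have hts : t.castSucc < s := by rw [Fin.lt_def]; exact hlt
    have := hleast ((succAbove_mem_fixedPoints_insertNth s w t).2 ht)
    rw [Fin.succAbove_of_castSucc_lt _ _ hts] at this
    exact absurd this (not_le.2 hts)
  · intro hs
    refine ⟨(self_mem_fixedPoints_insertNth s w).2 (hs ▸ balance_firstZero w), ?_⟩
    intro u hu
    induction u using Fin.succAboveCases s with
    | x => exact le_rfl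
    | p j =>
      have hj := (succAbove_mem_fixedPoints_insertNth s w j).1 hu
      have := firstZero_le_of_balance_eq_zero w (mem_fixedPoints.1 hj).2
      exact ((Fin.lt_succAbove_iff_le_castSucc s j).2 (by rw [Fin.le_def]; simpa [hs])).le

lemma sum_ite_apply_eq_sum_insertNth {α M : Type*} [Fintype α] [DecidableEq α]
    [AddCommMonoid M] (s : Fin (n + 1)) (a : α) (f : (Fin (n + 1) → α) → M) :
    ∑ w, (if w s = a then f w else 0) = ∑ w : Fin n → α, f (s.insertNth a w) := by
  rw [← (Fin.insertNthEquiv (fun _ => α) s).sum_comp, Fintype.sum_prod_type]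
  simp [Fin.insertNthEquiv]

theorem sum_prod_le_card_fixedPoints_succ {R : Type*} [CommSemiring R] (p : Ordering → R)
    (k : ℕ) :
    ∑ w : Fin (n + 1) → Ordering with k + 1 ≤ #(fixedPoints w), ∏ j, p (w j)
      = p .eq * ∑ w : Fin n → Ordering with k ≤ #(fixedPoints w), ∏ j, p (w j) := by
  classical
  rw [sum_filter, sum_filter, mul_sum]
  -- sort the words by their first fixed point `s`, then delete the letter `eq` at `s`
  calc ∑ w : Fin (n + 1) → Ordering, (if k + 1 ≤ #(fixedPoints w) then ∏ j, p (w j) else 0)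
      = ∑ w : Fin (n + 1) → Ordering, ∑ s, if IsLeast (fixedPoints w : Set (Fin (n + 1))) s ∧
          k + 1 ≤ #(fixedPoints w) then ∏ j, p (w j) else 0 := by
        refine sum_congr rfl fun w _ => ?_
        by_cases hk : k + 1 ≤ #(fixedPoints w)
        · have hne : (fixedPoints w).Nonempty := card_pos.1 (by omega)
          rw [if_pos hk, sum_eq_single_of_mem _ (mem_univ ((fixedPoints w).min' hne)),
            if_pos ⟨isLeast_min' _ hne, hk⟩]
          exact fun s _ hs => if_neg fun h => hs (h.1.unique (isLeast_min' _ hne))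
        · simp [hk]
    _ = ∑ s : Fin (n + 1), ∑ w : Fin (n + 1) → Ordering, if w s = .eq then
          (if IsLeast (fixedPoints w : Set (Fin (n + 1))) s ∧
          k + 1 ≤ #(fixedPoints w) then ∏ j, p (w j) else 0) else 0 := by
        rw [sum_comm]
        refine sum_congr rfl fun s _ => sum_congr rfl fun w _ => ?_
        by_cases hs : w s = .eq
        · rw [if_pos hs]
        · rw [if_neg hs, if_neg fun h => hs (mem_fixedPoints.1 h.1.1).1]
    _ = ∑ s : Fin (n + 1), ∑ w : Fin n → Ordering,
          if (s : ℕ) = firstZero w ∧ k ≤ #(fixedPoints w) then p .eq * ∏ j, p (w j) else 0 := by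
        refine sum_congr rfl fun s _ => ?_
        rw [sum_ite_apply_eq_sum_insertNth]
        refine sum_congr rfl fun w _ => ?_
        rw [Fin.prod_univ_succAbove _ s, isLeast_fixedPoints_insertNth_iff]
        simp only [Fin.insertNth_apply_same, Fin.insertNth_apply_succAbove]
        by_cases hs : (s : ℕ) = firstZero w
        · rw [card_fixedPoints_insertNth s w (hs ▸ balance_firstZero w)]
          simp [hs]
        · simp [hs]
    _ = ∑ w : Fin n → Ordering, if k ≤ #(fixedPoints w) then p .eq * ∏ j, p (w j) else 0 := by
        rw [sum_comm]
        refine sum_congr rfl fun w _ => ?_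
        have hfz : ∀ s : Fin (n + 1), (s : ℕ) = firstZero w ↔ s = ⟨firstZero w, by
            have := firstZero_le w; omega⟩ := fun s => by rw [Fin.ext_iff]
        simp only [ite_and, hfz, sum_ite_eq', mem_univ, if_true]
    _ = _ := by simp only [mul_ite, mul_zero]

theorem sum_prod_le_card_fixedPoints {R : Type*} [CommSemiring R] (p : Ordering → R) {k : ℕ}
    (hk : k ≤ n) :
    ∑ w : Fin n → Ordering with k ≤ #(fixedPoints w), ∏ j, p (w j)
      = p .eq ^ k * (∑ a, p a) ^ (n - k) := by
  induction k generalizing n with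
  | zero => simp [← Fintype.prod_sum]
  | succ k ih =>
    obtain ⟨m, rfl⟩ : ∃ m, n = m + 1 := ⟨n - 1, by omega⟩
    rw [sum_prod_le_card_fixedPoints_succ, ih (by omega), Nat.add_sub_add_right, pow_succ',
      mul_assoc]

lemma invGamma_eq_sub_balance {G : Fin n → ℕ} {i : ℕ} {j : Fin n} (hj : G j = i) :
    (invGamma G j : ℤ) = j - balance (fun j' => compare (G j') i) j := by
  have hj' : ((j : ℕ) : ℤ) = ∑ j' : Fin n, if j' < j then 1 else 0 := by
    simp [sum_boole, filter_gt_eq_Iio]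
  rw [invGamma, card_filter, hj', balance, Nat.cast_sum, ← sum_sub_distrib]
  refine sum_congr rfl fun j' _ => ?_
  simp only [hj, compare_lt_iff_lt, compare_gt_iff_gt, Fin.lt_def]
  split_ifs <;> omega

lemma Dcount_eq_card_fixedPoints (G : Fin n → ℕ) (i : ℕ) :
    Dcount G i = #(fixedPoints fun j => compare (G j) i) := by
  refine congrArg card (filter_congr fun j _ => ?_)
  rw [compare_eq_iff_eq]
  refine and_congr_right fun hj => ?_
  have := invGamma_eq_sub_balance hj
  omega

end MajSampler

lemma Dcount_le {n : ℕ} (G : Fin n → ℕ) (i : ℕ) : Dcount G i ≤ n :=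
  (Finset.card_filter_le _ _).trans (Finset.card_fin n).le

lemma measure_comp_mem_eq_sum_prod {Ω ι β γ : Type*} [MeasurableSpace Ω] [MeasurableSpace β]
    {μ : Measure Ω} [Fintype ι] {X : ι → Ω → β} (hX : ∀ j, Measurable (X j))
    (hind : iIndepFun X μ) (f : β → γ) (hf : ∀ c, MeasurableSet (f ⁻¹' {c}))
    (S : Finset (ι → γ)) :
    μ {ω | (fun j => f (X j ω)) ∈ S} = ∑ w ∈ S, ∏ j, μ (X j ⁻¹' (f ⁻¹' {w j})) := by
  have hset : {ω | (fun j => f (X j ω)) ∈ S} = ⋃ w ∈ S, ⋂ j, X j ⁻¹' (f ⁻¹' {w j}) := by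
    ext ω
    simp [← funext_iff]
  rw [hset, measure_biUnion_finset]
  · exact sum_congr rfl fun w _ => hind.meas_iInter fun j => ⟨_, hf (w j), rfl⟩
  · intro w _ w' _ hne
    refine Set.disjoint_left.2 fun ω hw hw' => hne ?_
    simp only [Set.mem_iInter, Set.mem_preimage, Set.mem_singleton_iff] at hw hw'
    exact funext fun j => (hw j).symm.trans (hw' j)
  · exact fun w _ => .iInter fun j => hX j (hf (w j))

lemma map_eq_geometricMeasure {Ω : Type*} [MeasurableSpace Ω] {μ : Measure Ω}
    [IsFiniteMeasure μ] {X : Ω → ℕ} (hX : Measurable X) {p : unitInterval} (hp : p ≠ 0)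
    (h : ∀ m, (μ {ω | X ω = m}).toReal = (1 - p) ^ m * p) :
    μ.map X = geometricMeasure p :=
  Measure.ext_of_singleton fun m => by
    rw [Measure.map_apply hX (measurableSet_singleton m), geometricMeasure_singleton hp, ← h m,
      ENNReal.ofReal_toReal (measure_ne_top _ _)]
    rfl

open MajSampler in
theorem measure_le_Dcount_eq_pow {Ω : Type*} [MeasurableSpace Ω] {μ : Measure Ω} {n : ℕ}
    {G : Fin n → Ω → ℕ} (hmeas : ∀ j, Measurable (G j)) (hindep : iIndepFun G μ)
    {ν : Measure ℕ} [IsProbabilityMeasure ν] (hlaw : ∀ j, μ.map (G j) = ν) (i : ℕ) {k : ℕ}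
    (hk : k ≤ n) :
    μ {ω | k ≤ Dcount (fun j => G j ω) i} = ν {i} ^ k := by
  set cmp : ℕ → Ordering := fun m => compare m i
  have hevent : {ω | k ≤ Dcount (fun j => G j ω) i}
      = {ω | (fun j => cmp (G j ω)) ∈ univ.filter fun w => k ≤ #(fixedPoints w)} := by
    ext ω
    simp [Dcount_eq_card_fixedPoints, cmp]
  have hletter : ∀ j a, μ (G j ⁻¹' (cmp ⁻¹' {a})) = ν (cmp ⁻¹' {a}) := fun j a => by
    rw [← hlaw j, Measure.map_apply (hmeas j) .of_discrete]
  have hlevel : cmp ⁻¹' {.eq} = {i} := by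
    ext
    simp [cmp]
  have htotal : ∑ a, ν (cmp ⁻¹' {a}) = 1 := by
    rw [sum_measure_preimage_singleton _ fun _ _ => .of_discrete]
    simp
  rw [hevent, measure_comp_mem_eq_sum_prod hmeas hindep cmp fun _ => .of_discrete]
  simp only [hletter]
  rw [sum_prod_le_card_fixedPoints (fun a => ν (cmp ⁻¹' {a})) hk, htotal, one_pow, mul_one,
    hlevel]

/-- For i.i.d. geometric `G₁, …, Gₙ` with parameter `1-q` and `D_i` the number of
fixed points of `Γₙ(G)` in `𝒢ᵢ`, we have `P(D_i ≥ k) = (qⁱ(1-q))^k` for `0 ≤ k ≤ n`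
and `P(D_i ≥ k) = 0` for `k > n`; i.e. `D_i ∼ min(Geom(1 - qⁱ(1-q)), n)`. -/
theorem fixed_points_level_geometric {Ω : Type*} [MeasurableSpace Ω] (μ : Measure Ω)
    [IsProbabilityMeasure μ] (q : ℝ) (hq0 : 0 < q) (hq1 : q < 1)
    (n : ℕ) (i : ℕ) (G : Fin n → Ω → ℕ) (hmeas : ∀ j, Measurable (G j))
    (hindep : iIndepFun G μ)
    (hgeom : ∀ j, ∀ m : ℕ, (μ {ω | G j ω = m}).toReal = q ^ m * (1 - q)) :
    (∀ k : ℕ, k ≤ n →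
        (μ {ω | k ≤ Dcount (fun j => G j ω) i}).toReal = (q ^ i * (1 - q)) ^ k) ∧
      (∀ k : ℕ, n < k → (μ {ω | k ≤ Dcount (fun j => G j ω) i}).toReal = 0) := by
  set p : unitInterval := ⟨1 - q, by linarith, by linarith⟩
  have hp : p ≠ 0 := fun h => by
    have := congrArg Subtype.val h
    simp only [p, Set.Icc.coe_zero] at this
    linarith
  have hlaw : ∀ j, μ.map (G j) = geometricMeasure p := fun j =>
    map_eq_geometricMeasure (hmeas j) hp fun m => by simp [p, hgeom]
  refine ⟨fun k hk => ?_, fun k hk => ?_⟩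
  · rw [measure_le_Dcount_eq_pow hmeas hindep hlaw i hk, geometricMeasure_singleton hp,
      ENNReal.toReal_pow, ENNReal.toReal_ofReal (geometricMeasure_nonneg p i)]
    simp [p]
  · have hempty : {ω | k ≤ Dcount (fun j => G j ω) i} = ∅ :=
      Set.eq_empty_of_forall_notMem fun ω hω =>
        absurd ((Dcount_le _ i).trans_lt hk) (not_lt.2 hω)
    simp [hempty]
end

section
/- For 0 < q < 1, the limit of the expected number of fixed points of Maj(n,q), ∑_{ℓ≥1}(1-q)^{ℓ-1}/[ℓ]_q, is strictly less than the limiting variance ∑_{ℓ≥1} ℓ(1-q)^{ℓ-1}/[ℓ]_q; hence the limiting distribution of fixed points under Maj(n,q) is not Poisson. -/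
lemma qint_ge_one (q : ℝ) (hq0 : 0 < q) (m : ℕ) : 1 ≤ qint q (m + 1) := by
  unfold qint
  calc (1 : ℝ) = ∑ j ∈ Finset.range 1, q ^ j := by simp
    _ ≤ ∑ j ∈ Finset.range (m + 1), q ^ j := by
        apply Finset.sum_le_sum_of_subset_of_nonneg
        · exact Finset.range_subset_range.2 (by omega)
        · intro i _ _; positivity

/-- For `0 < q < 1`, the limiting expected number of fixed points of `Maj(n,q)`,
`∑_{ℓ≥1} (1-q)^{ℓ-1}/[ℓ]_q`, is strictly smaller than the limiting variance
`∑_{ℓ≥1} ℓ(1-q)^{ℓ-1}/[ℓ]_q` (indexing `ℓ = m + 1`); hence the limiting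
distribution of fixed points is not Poisson. -/
theorem fixed_points_mean_lt_variance (q : ℝ) (hq0 : 0 < q) (hq1 : q < 1) :
    ∑' m : ℕ, (1 - q) ^ m / qint q (m + 1)
      < ∑' m : ℕ, ((m + 1 : ℕ) : ℝ) * (1 - q) ^ m / qint q (m + 1) := by
  have hr0 : (0:ℝ) ≤ 1 - q := by linarith
  have hr1 : ‖(1 - q : ℝ)‖ < 1 := by rw [Real.norm_eq_abs, abs_of_nonneg hr0]; linarith
  have hq : ∀ m : ℕ, 1 ≤ qint q (m + 1) := qint_ge_one q hq0
  have hqpos : ∀ m : ℕ, 0 < qint q (m + 1) := fun m => lt_of_lt_of_le one_pos (hq m)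
  have ha : ∀ m : ℕ, 0 ≤ (1 - q) ^ m / qint q (m + 1) :=
    fun m => div_nonneg (pow_nonneg hr0 m) (hqpos m).le
  -- summability of the larger series
  have hsum : Summable (fun m : ℕ => ((m + 1 : ℕ) : ℝ) * (1 - q) ^ m / qint q (m + 1)) := by
    have hg : Summable (fun m : ℕ => ((m : ℝ) + 1) * (1 - q) ^ m) := by
      have h1 := summable_pow_mul_geometric_of_norm_lt_one 1 hr1 (R := ℝ)
      have h2 := summable_geometric_of_norm_lt_one hr1
      simpa [add_mul, pow_one] using h1.add h2
    apply Summable.of_nonneg_of_le (fun m => div_nonneg (mul_nonneg (by positivity) (pow_nonneg hr0 m)) (hqpos m).le) _ hg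
    intro m
    rw [div_le_iff₀ (hqpos m)]
    push_cast
    calc ((m:ℝ) + 1) * (1 - q) ^ m = ((m:ℝ) + 1) * (1 - q) ^ m * 1 := by ring
      _ ≤ ((m:ℝ) + 1) * (1 - q) ^ m * qint q (m + 1) := by
          apply mul_le_mul_of_nonneg_left (hq m); positivity
  apply Summable.tsum_lt_tsum_of_nonneg (i := 1) ha _ _ hsum
  · intro m
    rw [mul_div_assoc]
    nth_rewrite 1 [← one_mul ((1 - q) ^ m / qint q (m + 1))]
    apply mul_le_mul_of_nonneg_right _ (ha m)
    exact_mod_cast Nat.one_le_iff_ne_zero.2 (by omega)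
  · have h1 : 0 < (1 - q) ^ 1 / qint q (1 + 1) := by
      apply div_pos (by simpa using (by linarith : (0:ℝ) < 1 - q)) (hqpos 1)
    rw [mul_div_assoc]
    nth_rewrite 1 [← one_mul ((1 - q) ^ 1 / qint q (1 + 1))]
    apply mul_lt_mul_of_pos_right _ h1
    norm_num
end

section
/- Fix 0 < q < 1 and k ∈ ℕ. Let G_1, ..., G_m be i.i.d. geometric with parameter 1-q, and let |G_i| = #{j : G_j = i}. Then the probability that the k sets G_0, G_1, ..., G_{k-1} are strictly the k largest among all G_i (i.e., min(|G_0|,...,|G_{k-1}|) > |G_i| for all i ≥ k) is 1 - O(e^{-cm}) for some constant c > 0 depending only on q and k. -/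
/-!
Set `p = q^k (1-q)`, `δ = (p/q - p)/2`, and fix `n` with `q^n < 1 - q`. The threshold `(p + δ) m`
lies midway between the means `m p` and `m p/q` of `|𝒢_k|` and `|𝒢_{k-1}|`. Each level is a sum of
independent indicators, so by Hoeffding's inequality every level `a < k` stays above the
threshold, and every level `k ≤ b < k + n` stays below it, except with probability
`exp (-2 δ² m)`. The infinitely many levels `b ≥ k + n` are handled at once: they are all bounded
by `#{j | k + n ≤ G j}`, a binomial count of mean `m q^(k+n) ≤ m p`. A union bound over these
`k + n + 1` events gives the claim with `c = 2 δ²` and `C = k + n + 1`.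
-/

open MeasureTheory ProbabilityTheory Real Finset

/-- `level G i` is the cardinality `|𝒢ᵢ|` of the level set `{j : G j = i}`. -/
def level {m : ℕ} (G : Fin m → ℕ) (i : ℕ) : ℕ :=
  (Finset.univ.filter (fun j : Fin m => G j = i)).card

section Probability

variable {Ω : Type*} [MeasurableSpace Ω] {μ : Measure Ω}

lemma measureReal_biUnion_le_card_mul [IsFiniteMeasure μ] {ι : Type*} {s : Finset ι}
    {E : ι → Set Ω} {ε : ℝ}
    (hE : ∀ i ∈ s, μ.real (E i) ≤ ε) : μ.real (⋃ i ∈ s, E i) ≤ #s * ε :=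
  (measureReal_biUnion_finset_le s E).trans (by simpa using Finset.sum_le_sum hE)

lemma measureReal_sum_ge_mul_card_le {ι : Type*} [Fintype ι] {X : ι → Ω → ℝ}
    (hind : iIndepFun X μ) (hsub : ∀ j, HasSubgaussianMGF (X j) (1 / 4) μ) {δ : ℝ} (hδ : 0 ≤ δ) :
    μ.real {ω | δ * Fintype.card ι ≤ ∑ j, X j ω} ≤ exp (-2 * δ ^ 2 * Fintype.card ι) := by
  refine (HasSubgaussianMGF.measure_sum_ge_le_of_iIndepFun hind (c := fun _ => 1 / 4)
    (fun j _ => hsub j) (mul_nonneg hδ (Nat.cast_nonneg _))).trans_eq ?_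
  rcases eq_or_ne (Fintype.card ι : ℝ) 0 with h | h
  · simp [h]
  · congr 1
    push_cast [Finset.sum_const, Finset.card_univ]
    field_simp
    ring

variable [IsProbabilityMeasure μ]

lemma one_sub_le_measureReal_of_compl_subset {s t : Set Ω} (h : sᶜ ⊆ t) :
    1 - μ.real t ≤ μ.real s := by
  have := measureReal_union_le (μ := μ) s sᶜ
  rw [Set.union_compl_self, probReal_univ] at this
  linarith [measureReal_mono (μ := μ) h]

section Indicators

variable {α ι : Type*} [MeasurableSpace α] [Fintype ι] {P : α → Prop} [DecidablePred P]

lemma hasSubgaussianMGF_boole_sub_measureReal {Z : Ω → α} (hZ : Measurable Z)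
    (hP : MeasurableSet {x | P x}) :
    HasSubgaussianMGF (fun ω => (if P (Z ω) then 1 else 0 : ℝ) - μ.real {ω | P (Z ω)})
      (1 / 4) μ := by
  have hmeas : MeasurableSet {ω | P (Z ω)} := hZ hP
  have h := hasSubgaussianMGF_of_mem_Icc (μ := μ) (a := 0) (b := 1)
    (X := fun ω => if P (Z ω) then 1 else 0)
    (Measurable.ite hmeas measurable_const measurable_const).aemeasurable
    (ae_of_all _ fun ω => by split_ifs <;> simp)
  have hint : ∫ ω, (if P (Z ω) then 1 else 0 : ℝ) ∂μ = μ.real {ω | P (Z ω)} := by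
    rw [← integral_indicator_one hmeas]
    simp only [Set.indicator_apply, Set.mem_ofPred_eq, Pi.one_apply]
  norm_num [hint] at h
  exact h

variable {Y : ι → Ω → α} {t δ : ℝ}

lemma measureReal_card_filter_ge_le_of_iIndepFun (hY : ∀ j, Measurable (Y j))
    (hind : iIndepFun Y μ) (hP : MeasurableSet {x | P x})
    (hmean : ∀ j, μ.real {ω | P (Y j ω)} + δ ≤ t) (hδ : 0 ≤ δ) :
    μ.real {ω | t * Fintype.card ι ≤ #{j | P (Y j ω)}} ≤ exp (-2 * δ ^ 2 * Fintype.card ι) := by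
  set X : ι → Ω → ℝ := fun j ω => (if P (Y j ω) then 1 else 0) - μ.real {ω | P (Y j ω)}
  have hindX : iIndepFun X μ :=
    hind.comp (fun j x => (if P x then 1 else 0) - μ.real {ω | P (Y j ω)})
      fun j => (Measurable.ite hP measurable_const measurable_const).sub_const _
  refine le_trans (measureReal_mono fun ω hω => ?_)
    (measureReal_sum_ge_mul_card_le hindX
      (fun j => hasSubgaussianMGF_boole_sub_measureReal (hY j) hP) hδ)
  simp only [Set.mem_ofPred_eq, natCast_card_filter] at hω ⊢
  have : ∑ j, (μ.real {ω | P (Y j ω)} + δ) ≤ t * Fintype.card ι := by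
    simpa [mul_comm] using Finset.sum_le_sum fun j (_ : j ∈ univ) => hmean j
  simp only [X, Finset.sum_sub_distrib]
  simp only [Finset.sum_add_distrib, sum_const, card_univ, nsmul_eq_mul] at this
  linarith

lemma measureReal_card_filter_le_le_of_iIndepFun (hY : ∀ j, Measurable (Y j))
    (hind : iIndepFun Y μ) (hP : MeasurableSet {x | P x})
    (hmean : ∀ j, t + δ ≤ μ.real {ω | P (Y j ω)}) (hδ : 0 ≤ δ) :
    μ.real {ω | #{j | P (Y j ω)} ≤ t * Fintype.card ι} ≤ exp (-2 * δ ^ 2 * Fintype.card ι) := by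
  set X : ι → Ω → ℝ := fun j ω => μ.real {ω | P (Y j ω)} - (if P (Y j ω) then 1 else 0)
  have hindX : iIndepFun X μ :=
    hind.comp (fun j x => μ.real {ω | P (Y j ω)} - (if P x then 1 else 0))
      fun j => (Measurable.ite hP measurable_const measurable_const).const_sub _
  have hsub : ∀ j, HasSubgaussianMGF (X j) (1 / 4) μ := fun j => by
    convert (hasSubgaussianMGF_boole_sub_measureReal (μ := μ) (hY j) hP).neg using 1
    ext ω
    simp [X]
  refine le_trans (measureReal_mono fun ω hω => ?_) (measureReal_sum_ge_mul_card_le hindX hsub hδ)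
  simp only [Set.mem_ofPred_eq, natCast_card_filter] at hω ⊢
  have : ∑ j, (t + δ) ≤ ∑ j, μ.real {ω | P (Y j ω)} :=
    Finset.sum_le_sum fun j _ => hmean j
  simp only [X, Finset.sum_sub_distrib]
  simp only [sum_const, card_univ, nsmul_eq_mul] at this
  linarith

end Indicators

lemma measureReal_ge_eq_pow_of_geometric {X : Ω → ℕ} (hX : Measurable X) {q : ℝ}
    (hX_geom : ∀ i, μ.real {ω | X ω = i} = q ^ i * (1 - q)) (n : ℕ) :
    μ.real {ω | n ≤ X ω} = q ^ n := by
  induction n with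
  | zero => simp
  | succ n ih =>
    have hsplit : {ω | n ≤ X ω} = {ω | X ω = n} ∪ {ω | n + 1 ≤ X ω} := by
      ext ω; simp only [Set.mem_ofPred_eq, Set.mem_union]; omega
    have hdisj : Disjoint {ω | X ω = n} {ω | n + 1 ≤ X ω} :=
      Set.disjoint_left.2 fun ω h h' => by simp_all
    rw [hsplit, measureReal_union hdisj (hX measurableSet_Ici), hX_geom] at ih
    rw [pow_succ]
    linarith

end Probability

lemma level_lt_level_of_bounds {m k B : ℕ} {g : Fin m → ℕ} {x : ℝ}
    (hlow : ∀ a < k, x < level g a) (hmid : ∀ b ∈ Ico k B, (level g b : ℝ) < x)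
    (htail : (#{j | B ≤ g j} : ℝ) < x) {a b : ℕ} (ha : a < k) (hb : k ≤ b) :
    level g b < level g a := by
  suffices (level g b : ℝ) < x by exact_mod_cast this.trans (hlow a ha)
  rcases lt_or_ge b B with hbB | hBb
  · exact hmid b (mem_Ico.2 ⟨hb, hbB⟩)
  · refine lt_of_le_of_lt ?_ htail
    exact_mod_cast card_le_card fun j hj => by
      simp only [mem_filter, mem_univ, true_and] at hj ⊢
      omega

section LargestLevels

variable {m : ℕ} {Ω : Type*} [MeasurableSpace Ω] {μ : Measure Ω} [IsProbabilityMeasure μ]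
  {G : Fin m → Ω → ℕ} {q t δ : ℝ}

lemma measureReal_level_le_le_of_geometric (hG : ∀ j, Measurable (G j)) (hind : iIndepFun G μ)
    (hgeom : ∀ j i, μ.real {ω | G j ω = i} = q ^ i * (1 - q)) {a : ℕ}
    (ha : t + δ ≤ q ^ a * (1 - q)) (hδ : 0 ≤ δ) :
    μ.real {ω | (level (fun j => G j ω) a : ℝ) ≤ t * m} ≤ exp (-2 * δ ^ 2 * m) := by
  have := measureReal_card_filter_le_le_of_iIndepFun (P := (· = a)) hG hind
    (measurableSet_singleton a) (fun j => (hgeom j a).symm ▸ ha) hδ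
  rwa [Fintype.card_fin] at this

lemma measureReal_level_ge_le_of_geometric (hG : ∀ j, Measurable (G j)) (hind : iIndepFun G μ)
    (hgeom : ∀ j i, μ.real {ω | G j ω = i} = q ^ i * (1 - q)) {b : ℕ}
    (hb : q ^ b * (1 - q) + δ ≤ t) (hδ : 0 ≤ δ) :
    μ.real {ω | t * m ≤ (level (fun j => G j ω) b : ℝ)} ≤ exp (-2 * δ ^ 2 * m) := by
  have := measureReal_card_filter_ge_le_of_iIndepFun (P := (· = b)) hG hind
    (measurableSet_singleton b) (fun j => (hgeom j b).symm ▸ hb) hδ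
  rwa [Fintype.card_fin] at this

lemma measureReal_card_ge_ge_le_of_geometric (hG : ∀ j, Measurable (G j))
    (hind : iIndepFun G μ) (hgeom : ∀ j i, μ.real {ω | G j ω = i} = q ^ i * (1 - q)) {B : ℕ}
    (hB : q ^ B + δ ≤ t) (hδ : 0 ≤ δ) :
    μ.real {ω | t * m ≤ (#{j | B ≤ G j ω} : ℝ)} ≤ exp (-2 * δ ^ 2 * m) := by
  have := measureReal_card_filter_ge_le_of_iIndepFun (P := (B ≤ ·)) hG hind measurableSet_Ici
    (fun j => (measureReal_ge_eq_pow_of_geometric (hG j) (hgeom j) B).symm ▸ hB) hδ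
  rwa [Fintype.card_fin] at this

lemma one_sub_mul_le_measureReal_largest_levels {x ε : ℝ} {k n : ℕ}
    (hlow : ∀ a ∈ range k, μ.real {ω | (level (fun j => G j ω) a : ℝ) ≤ x} ≤ ε)
    (hmid : ∀ b ∈ Ico k (k + n), μ.real {ω | x ≤ (level (fun j => G j ω) b : ℝ)} ≤ ε)
    (htail : μ.real {ω | x ≤ (#{j | k + n ≤ G j ω} : ℝ)} ≤ ε) :
    1 - (k + n + 1) * ε ≤ μ.real {ω | ∀ a b : ℕ, a < k → k ≤ b →
      level (fun j => G j ω) b < level (fun j => G j ω) a} := by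
  refine le_trans ?_ (one_sub_le_measureReal_of_compl_subset (t :=
    (⋃ a ∈ range k, {ω | (level (fun j => G j ω) a : ℝ) ≤ x}) ∪
    (⋃ b ∈ Ico k (k + n), {ω | x ≤ (level (fun j => G j ω) b : ℝ)}) ∪
    {ω | x ≤ (#{j | k + n ≤ G j ω} : ℝ)}) fun ω hω => ?_)
  · refine sub_le_sub_left ((measureReal_union_le _ _).trans (add_le_add
      ((measureReal_union_le _ _).trans (add_le_add (measureReal_biUnion_le_card_mul hlow)
        (measureReal_biUnion_le_card_mul hmid))) htail)) 1 |>.trans_eq' ?_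
    simp only [card_range, Nat.card_Ico, add_tsub_cancel_left]
    ring
  · by_contra hbad
    simp only [Set.mem_union, Set.mem_iUnion, Set.mem_ofPred_eq, not_or, not_exists, not_le,
      exists_prop, mem_range, not_and] at hbad
    obtain ⟨⟨hlow', hmid'⟩, htail'⟩ := hbad
    exact hω fun a b ha hb => level_lt_level_of_bounds hlow' hmid' htail' ha hb

end LargestLevels

/-- For i.i.d. geometric `G₁, …, G_m` with parameter `1-q`, the probability that the
levels `𝒢₀, …, 𝒢_{k-1}` are strictly the `k` largest among all levels is
`1 - O(e^{-c m})` for some constant `c > 0` depending only on `q` and `k`. -/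
theorem largest_levels (q : ℝ) (hq0 : 0 < q) (hq1 : q < 1) (k : ℕ) :
    ∃ c : ℝ, 0 < c ∧ ∃ C : ℝ,
      ∀ (m : ℕ) (Ω : Type) (_ : MeasurableSpace Ω) (μ : Measure Ω)
        (_ : IsProbabilityMeasure μ) (G : Fin m → Ω → ℕ),
        (∀ j, Measurable (G j)) →
        iIndepFun G μ →
        (∀ j, ∀ i : ℕ, (μ {ω | G j ω = i}).toReal = q ^ i * (1 - q)) →
        1 - C * Real.exp (-c * m) ≤
          (μ {ω | ∀ a b : ℕ, a < k → k ≤ b →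
            level (fun j => G j ω) b < level (fun j => G j ω) a}).toReal := by
  set p := q ^ k * (1 - q)
  set δ := (p / q - p) / 2
  have hδ : 0 < δ := by
    have : p < p / q := by rw [lt_div_iff₀ hq0]; nlinarith [show 0 < p by positivity]
    exact half_pos (sub_pos.2 this)
  obtain ⟨n, hn⟩ := exists_pow_lt_of_lt_one (sub_pos.2 hq1) hq1
  refine ⟨2 * δ ^ 2, by positivity, k + n + 1, fun m Ω _ μ _ G hG hind hgeom => ?_⟩
  rw [show -(2 * δ ^ 2) * (m : ℝ) = -2 * δ ^ 2 * m by ring]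
  refine one_sub_mul_le_measureReal_largest_levels (x := (p + δ) * m) (fun a ha => ?_)
    (fun b hb => ?_) ?_
  · refine measureReal_level_le_le_of_geometric hG hind hgeom ?_ hδ.le
    have : q ^ k ≤ q * q ^ a :=
      pow_succ' q a ▸ pow_le_pow_of_le_one hq0.le hq1.le (mem_range.1 ha)
    have : p ≤ q * (q ^ a * (1 - q)) := by nlinarith
    rw [show p + δ + δ = p / q by ring, div_le_iff₀ hq0]
    linarith
  · refine measureReal_level_ge_le_of_geometric hG hind hgeom ?_ hδ.le
    have := pow_le_pow_of_le_one hq0.le hq1.le (mem_Ico.1 hb).1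
    nlinarith
  · refine measureReal_card_ge_ge_le_of_geometric hG hind hgeom ?_ hδ.le
    have : q ^ (k + n) ≤ p := pow_add q k n ▸ mul_le_mul_of_nonneg_left hn.le (by positivity)
    linarith
end
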